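/- arXiv:1011.6195 — 4 statements merged into one kernel-verified Lean document; each statement's English description precedes it below -/
import Mathlib

section
/- Let F(q,u) = qu(1-q)²/((1-2q)(1-q-qu)) and G(q,u) = -q(1-q-u+qu-q²u)/((1-2q)(1-q-qu)). For all complex q, u with |q| < 1/10 and |u| ≤ 1, the series W(q,u) := ∑_{m=0}^∞ F(q,q^m u) ∏_{k=0}^{m-1} G(q,q^k u) converges absolutely and satisfies the functional equation W(q,u) = F(q,u) + G(q,u)·W(q,qu). Moreover W is the unique bounded function on {(q,u) : |q| < 1/10, |u| ≤ 1} satisfying this functional equation together with W(q,0) = 0 for all |q| < 1/10. -/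
open Complex Filter Topology

noncomputable section

def Ffun (q u : ℂ) : ℂ := q * u * (1 - q) ^ 2 / ((1 - 2 * q) * (1 - q - q * u))

def Gfun (q u : ℂ) : ℂ :=
  -q * (1 - q - u + q * u - q ^ 2 * u) / ((1 - 2 * q) * (1 - q - q * u))

/-- `W(q,u) = ∑_{m=0}^∞ F(q,q^m u) ∏_{k=0}^{m-1} G(q,q^k u)` -/
def Wfun (q u : ℂ) : ℂ :=
  ∑' m : ℕ, Ffun q (q ^ m * u) * ∏ k ∈ Finset.range m, Gfun q (q ^ k * u)

/-!
For fixed `q`, the equation `W(u) = F(u) + G(u) W(qu)` is a linear equation `V = f + g · V ∘ T`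
in which `T u = qu` maps the closed unit disc into itself, and there `‖F‖, ‖G‖ ≤ 1/2` because
the common denominator has modulus at least `16/25`. Unfolding the equation `m` times gives the
`m`-th partial sum of the series plus `∏_{k<m} g(T^k u) · V(T^m u)`, so the series is dominated
by a geometric one and solves the equation, and the difference of two bounded solutions is
bounded by `(1/2)^m · B` for every `m`, hence vanishes.
-/

section IterSeries

open Set Finset

variable {α 𝕜 : Type*} [NormedField 𝕜]

def iterSeries (f g : α → 𝕜) (T : α → α) (x : α) : 𝕜 :=
  ∑' m : ℕ, f (T^[m] x) * ∏ k ∈ range m, g (T^[k] x)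

variable {f g : α → 𝕜} {T : α → α} {s : Set α} {A c : ℝ} {x : α}

theorem norm_iterSeries_term_le (hT : MapsTo T s s) (hf : ∀ y ∈ s, ‖f y‖ ≤ A)
    (hg : ∀ y ∈ s, ‖g y‖ ≤ c) (hx : x ∈ s) (m : ℕ) :
    ‖f (T^[m] x) * ∏ k ∈ range m, g (T^[k] x)‖ ≤ A * c ^ m := by
  have hA : 0 ≤ A := (norm_nonneg _).trans (hf x hx)
  have hprod : ∏ k ∈ range m, ‖g (T^[k] x)‖ ≤ c ^ m := by
    simpa using prod_le_prod (s := range m) (fun k _ => norm_nonneg _)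
      fun k _ => hg _ (hT.iterate k hx)
  rw [norm_mul, norm_prod]
  exact mul_le_mul (hf _ (hT.iterate m hx)) hprod (prod_nonneg fun _ _ => norm_nonneg _) hA

theorem summable_norm_iterSeries_term (hT : MapsTo T s s) (hf : ∀ y ∈ s, ‖f y‖ ≤ A)
    (hg : ∀ y ∈ s, ‖g y‖ ≤ c) (hc : c < 1) (hx : x ∈ s) :
    Summable fun m : ℕ => ‖f (T^[m] x) * ∏ k ∈ range m, g (T^[k] x)‖ := by
  have hc0 : 0 ≤ c := (norm_nonneg _).trans (hg x hx)
  exact .of_nonneg_of_le (fun _ => norm_nonneg _) (norm_iterSeries_term_le hT hf hg hx)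
    ((summable_geometric_of_lt_one hc0 hc).mul_left A)

theorem norm_iterSeries_le (hT : MapsTo T s s) (hf : ∀ y ∈ s, ‖f y‖ ≤ A)
    (hg : ∀ y ∈ s, ‖g y‖ ≤ c) (hc : c < 1) (hx : x ∈ s) :
    ‖iterSeries f g T x‖ ≤ A * (1 - c)⁻¹ := by
  have hc0 : 0 ≤ c := (norm_nonneg _).trans (hg x hx)
  exact tsum_of_norm_bounded ((hasSum_geometric_of_lt_one hc0 hc).mul_left A)
    (norm_iterSeries_term_le hT hf hg hx)

theorem iterSeries_eq_add_mul [CompleteSpace 𝕜] (hT : MapsTo T s s) (hf : ∀ y ∈ s, ‖f y‖ ≤ A)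
    (hg : ∀ y ∈ s, ‖g y‖ ≤ c) (hc : c < 1) (hx : x ∈ s) :
    iterSeries f g T x = f x + g x * iterSeries f g T (T x) := by
  have hsum := (summable_norm_iterSeries_term hT hf hg hc hx).of_norm
  have hshift : ∀ m : ℕ,
      f (T^[m + 1] x) * ∏ k ∈ range (m + 1), g (T^[k] x) =
        g x * (f (T^[m] (T x)) * ∏ k ∈ range m, g (T^[k] (T x))) := by
    intro m
    simp only [prod_range_succ', Function.iterate_succ_apply, Function.iterate_zero_apply]
    ring
  rw [iterSeries, hsum.tsum_eq_zero_add, tsum_congr hshift, tsum_mul_left]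
  simp [iterSeries]

theorem eq_zero_of_bounded_of_eq_mul_comp {D : α → 𝕜} {B : ℝ} (hT : MapsTo T s s)
    (hg : ∀ y ∈ s, ‖g y‖ ≤ c) (hc : c < 1) (hD : ∀ y ∈ s, ‖D y‖ ≤ B)
    (hDeq : ∀ y ∈ s, D y = g y * D (T y)) (hx : x ∈ s) : D x = 0 := by
  have hc0 : 0 ≤ c := (norm_nonneg _).trans (hg x hx)
  have hdecay : ∀ n : ℕ, ∀ y ∈ s, ‖D y‖ ≤ c ^ n * B := by
    intro n
    induction n with
    | zero => simpa using hD
    | succ n ih =>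
      intro y hy
      calc ‖D y‖ = ‖g y‖ * ‖D (T y)‖ := by rw [hDeq y hy, norm_mul]
        _ ≤ c * (c ^ n * B) := mul_le_mul (hg y hy) (ih _ (hT hy)) (norm_nonneg _) hc0
        _ = c ^ (n + 1) * B := by ring
  have hlim : Tendsto (fun n : ℕ => c ^ n * B) atTop (𝓝 0) := by
    simpa using (tendsto_pow_atTop_nhds_zero_of_lt_one hc0 hc).mul_const B
  exact norm_le_zero_iff.mp (ge_of_tendsto' hlim fun n => hdecay n x hx)

theorem eq_iterSeries_of_bounded [CompleteSpace 𝕜] {V : α → 𝕜} {B : ℝ} (hT : MapsTo T s s)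
    (hf : ∀ y ∈ s, ‖f y‖ ≤ A) (hg : ∀ y ∈ s, ‖g y‖ ≤ c) (hc : c < 1)
    (hV : ∀ y ∈ s, ‖V y‖ ≤ B) (hVeq : ∀ y ∈ s, V y = f y + g y * V (T y)) (hx : x ∈ s) :
    V x = iterSeries f g T x := by
  refine sub_eq_zero.mp <| eq_zero_of_bounded_of_eq_mul_comp
    (D := fun y => V y - iterSeries f g T y) (B := B + A * (1 - c)⁻¹) hT hg hc
    (fun y hy => ?_) (fun y hy => ?_) hx
  · exact (norm_sub_le _ _).trans (add_le_add (hV y hy) (norm_iterSeries_le hT hf hg hc hy))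
  · rw [hVeq y hy, iterSeries_eq_add_mul hT hf hg hc hy]
    ring

end IterSeries

section Disc

variable {q u : ℂ}

theorem norm_denom_ge (hq : ‖q‖ < 1 / 10) (hu : ‖u‖ ≤ 1) :
    16 / 25 ≤ ‖(1 - 2 * q) * (1 - q - q * u)‖ := by
  have h₁ : 4 / 5 ≤ ‖1 - 2 * q‖ := by
    have := norm_sub_norm_le 1 (2 * q)
    rw [norm_one, norm_mul, Complex.norm_two] at this
    linarith
  have h₂ : 4 / 5 ≤ ‖1 - q - q * u‖ := by
    have := norm_sub_norm_le 1 (q * (1 + u))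
    rw [norm_one, norm_mul] at this
    have h1u : ‖1 + u‖ ≤ 2 := (norm_add_le _ _).trans (by rw [norm_one]; linarith)
    rw [show (1 : ℂ) - q - q * u = 1 - q * (1 + u) by ring]
    nlinarith [norm_nonneg q]
  rw [norm_mul]
  nlinarith

theorem norm_Ffun_le (hq : ‖q‖ < 1 / 10) (hu : ‖u‖ ≤ 1) : ‖Ffun q u‖ ≤ 1 / 2 := by
  have hq' := hq.le
  have hnum : ‖q * u * (1 - q) ^ 2‖ ≤ 1 / 8 :=
    calc ‖q * u * (1 - q) ^ 2‖ ≤ ‖q‖ * ‖u‖ * (1 + ‖q‖) ^ 2 := by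
          rw [norm_mul, norm_mul, norm_pow]
          gcongr
          simpa using norm_sub_le (1 : ℂ) q
      _ ≤ 1 / 10 * 1 * (1 + 1 / 10) ^ 2 := by gcongr
      _ ≤ 1 / 8 := by norm_num
  calc ‖Ffun q u‖ ≤ (1 / 8) / (16 / 25) := by
        rw [Ffun, norm_div]
        gcongr
        exact norm_denom_ge hq hu
    _ ≤ 1 / 2 := by norm_num

theorem norm_Gfun_le (hq : ‖q‖ < 1 / 10) (hu : ‖u‖ ≤ 1) : ‖Gfun q u‖ ≤ 1 / 2 := by
  have hq' := hq.le
  have hnum : ‖-q * (1 - q - u + q * u - q ^ 2 * u)‖ ≤ 1 / 4 :=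
    calc ‖-q * (1 - q - u + q * u - q ^ 2 * u)‖
          = ‖q‖ * ‖(1 - q) * (1 - u) - q ^ 2 * u‖ := by
          rw [norm_mul, norm_neg]
          ring_nf
      _ ≤ ‖q‖ * ((1 + ‖q‖) * (1 + ‖u‖) + ‖q‖ ^ 2 * ‖u‖) := by
          gcongr
          refine (norm_sub_le _ _).trans ?_
          rw [norm_mul, norm_mul, norm_pow]
          gcongr
          · simpa using norm_sub_le (1 : ℂ) q
          · simpa using norm_sub_le (1 : ℂ) u
      _ ≤ 1 / 10 * ((1 + 1 / 10) * (1 + 1) + (1 / 10) ^ 2 * 1) := by gcongr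
      _ ≤ 1 / 4 := by norm_num
  calc ‖Gfun q u‖ ≤ (1 / 4) / (16 / 25) := by
        rw [Gfun, norm_div]
        gcongr
        exact norm_denom_ge hq hu
    _ ≤ 1 / 2 := by norm_num

end Disc

theorem mapsTo_mul_left_norm_le_one {q : ℂ} (hq : ‖q‖ ≤ 1) :
    Set.MapsTo (q * ·) {u : ℂ | ‖u‖ ≤ 1} {u : ℂ | ‖u‖ ≤ 1} :=
  fun u hu => (norm_mul q u).trans_le (mul_le_one₀ hq (norm_nonneg u) hu)

theorem Wfun_eq_iterSeries (q u : ℂ) : Wfun q u = iterSeries (Ffun q) (Gfun q) (q * ·) u := by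
  simp only [Wfun, iterSeries, mul_left_iterate_apply]

/-- For `|q| < 1/10`, `|u| ≤ 1`, the series defining `W(q,u)` converges absolutely and
`W` satisfies `W(q,u) = F(q,u) + G(q,u) W(q,qu)`; moreover `W` is the unique bounded
solution of this functional equation with `W(q,0) = 0`. -/
theorem prudent_W_functional_equation :
    (∀ q u : ℂ, ‖q‖ < 1 / 10 → ‖u‖ ≤ 1 →
      Summable (fun m : ℕ =>
        ‖Ffun q (q ^ m * u) * ∏ k ∈ Finset.range m, Gfun q (q ^ k * u)‖) ∧
      Wfun q u = Ffun q u + Gfun q u * Wfun q (q * u)) ∧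
    (∀ W' : ℂ → ℂ → ℂ,
      (∃ M : ℝ, ∀ q u : ℂ, ‖q‖ < 1 / 10 → ‖u‖ ≤ 1 → ‖W' q u‖ ≤ M) →
      (∀ q u : ℂ, ‖q‖ < 1 / 10 → ‖u‖ ≤ 1 →
        W' q u = Ffun q u + Gfun q u * W' q (q * u)) →
      (∀ q : ℂ, ‖q‖ < 1 / 10 → W' q 0 = 0) →
      ∀ q u : ℂ, ‖q‖ < 1 / 10 → ‖u‖ ≤ 1 → W' q u = Wfun q u) := by
  have hT : ∀ q : ℂ, ‖q‖ < 1 / 10 → Set.MapsTo (q * ·) {u : ℂ | ‖u‖ ≤ 1} _ :=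
    fun q hq => mapsTo_mul_left_norm_le_one (by linarith)
  have hc : (1 / 2 : ℝ) < 1 := by norm_num
  refine ⟨fun q u hq hu => ⟨?_, ?_⟩, ?_⟩
  · simpa only [mul_left_iterate_apply] using summable_norm_iterSeries_term (hT q hq)
      (fun _ => norm_Ffun_le hq) (fun _ => norm_Gfun_le hq) hc hu
  · simp only [Wfun_eq_iterSeries]
    exact iterSeries_eq_add_mul (hT q hq) (fun _ => norm_Ffun_le hq) (fun _ => norm_Gfun_le hq)
      hc hu
  · rintro W' ⟨M, hM⟩ hW' - q u hq hu
    rw [Wfun_eq_iterSeries]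
    exact eq_iterSeries_of_bounded (hT q hq) (fun _ => norm_Ffun_le hq)
      (fun _ => norm_Gfun_le hq) hc (hM q · hq) (hW' q · hq) hu
end
end

section
/- For every integer k ≥ 1 the polynomial 1 - 2x + x^{k+2} has exactly one root z̄_k in the open interval (0,1); this root satisfies 1/2 < z̄_k ≤ (√5 - 1)/2, with z̄_1 = (√5 - 1)/2, and z̄_k → 1/2 as k → ∞; moreover 0 < z̄_k - 1/2 ≤ (1/2)·z̄_1^{k+2}, so the convergence is geometrically fast. -/
/-!
Dividing `1 - 2x + x^{k+2}` by `1 - x` leaves `f(x) = 1 - x - x² - ⋯ - x^{k+1}`, which is strictly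
decreasing on `[0, ∞)` with `f(0) = 1` and `f(1) = -k`; so it has exactly one root in `(0, 1)`.
Since `f(1/2) = 2^{-(k+1)} > 0` and `f(ϑ) ≤ 1 - ϑ - ϑ² = 0` for `ϑ = (√5 - 1)/2`, the root lies in
`(1/2, ϑ]`, and then the equation `z̄ - 1/2 = z̄^{k+2}/2` gives the geometric bound.
-/

open Filter Topology Finset

def oneSubSumPow {R : Type*} [CommRing R] (n : ℕ) (x : R) : R :=
  1 - ∑ i ∈ range n, x ^ (i + 1)

theorem one_sub_mul_oneSubSumPow {R : Type*} [CommRing R] (n : ℕ) (x : R) :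
    (1 - x) * oneSubSumPow n x = 1 - 2 * x + x ^ (n + 1) := by
  have hsum : ∑ i ∈ range n, x ^ (i + 1) = x * ∑ i ∈ range n, x ^ i := by
    rw [mul_sum]
    exact sum_congr rfl fun i _ => pow_succ' x i
  rw [oneSubSumPow, hsum]
  linear_combination -x * mul_neg_geom_sum x n

section Real

variable {n : ℕ} {x : ℝ}

theorem continuous_oneSubSumPow (n : ℕ) : Continuous (oneSubSumPow n : ℝ → ℝ) := by
  unfold oneSubSumPow
  fun_prop

theorem strictAntiOn_oneSubSumPow (hn : n ≠ 0) :
    StrictAntiOn (oneSubSumPow n : ℝ → ℝ) (Set.Ici 0) := by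
  intro a ha b _ hab
  have : ∑ i ∈ range n, a ^ (i + 1) < ∑ i ∈ range n, b ^ (i + 1) :=
    sum_lt_sum_of_nonempty (nonempty_range_iff.2 hn) fun i _ =>
      pow_lt_pow_left₀ hab ha i.succ_ne_zero
  unfold oneSubSumPow
  linarith

theorem oneSubSumPow_antitone (hx : 0 ≤ x) : Antitone fun n => oneSubSumPow n x := by
  intro m n hmn
  have : ∑ i ∈ range m, x ^ (i + 1) ≤ ∑ i ∈ range n, x ^ (i + 1) :=
    sum_le_sum_of_subset_of_nonneg (range_subset_range.2 hmn) fun i _ _ => by positivity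
  unfold oneSubSumPow
  linarith

theorem oneSubSumPow_zero_right (n : ℕ) : oneSubSumPow n (0 : ℝ) = 1 := by
  simp [oneSubSumPow]

theorem oneSubSumPow_one_right (n : ℕ) : oneSubSumPow n (1 : ℝ) = 1 - n := by
  simp [oneSubSumPow]

theorem oneSubSumPow_half (n : ℕ) : oneSubSumPow n (1 / 2 : ℝ) = (1 / 2) ^ n := by
  have h := one_sub_mul_oneSubSumPow n (1 / 2 : ℝ)
  rw [pow_succ] at h
  linarith

theorem oneSubSumPow_eq_zero_iff (hx : x < 1) :
    oneSubSumPow n x = 0 ↔ 1 - 2 * x + x ^ (n + 1) = 0 := by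
  rw [← one_sub_mul_oneSubSumPow, mul_eq_zero, or_iff_right (sub_ne_zero.2 hx.ne')]

end Real

section GoldenConj

open Real

theorem sqrt_five_sub_one_div_two_eq : (√5 - 1) / 2 = -goldenConj := by
  rw [goldenConj]
  ring

theorem sqrt_five_sub_one_div_two_mem_Ioo : (√5 - 1) / 2 ∈ Set.Ioo (0 : ℝ) 1 := by
  rw [sqrt_five_sub_one_div_two_eq]
  constructor <;> linarith [goldenConj_neg, neg_one_lt_goldenConj]

theorem oneSubSumPow_two_sqrt_five_sub_one_div_two : oneSubSumPow 2 ((√5 - 1) / 2) = 0 := by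
  have h := goldenConj_sq
  rw [sqrt_five_sub_one_div_two_eq]
  simp only [oneSubSumPow, sum_range_succ, sum_range_zero]
  linear_combination -h

theorem oneSubSumPow_sqrt_five_sub_one_div_two_nonpos {n : ℕ} (hn : 2 ≤ n) :
    oneSubSumPow n ((√5 - 1) / 2) ≤ 0 :=
  oneSubSumPow_two_sqrt_five_sub_one_div_two ▸
    oneSubSumPow_antitone sqrt_five_sub_one_div_two_mem_Ioo.1.le hn

end GoldenConj

section Roots

variable {n : ℕ} {x : ℝ}

theorem existsUnique_root_one_sub_two_mul_add_pow (hn : 2 ≤ n) :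
    ∃! x : ℝ, x ∈ Set.Ioo 0 1 ∧ 1 - 2 * x + x ^ (n + 1) = 0 := by
  have hsign : (0 : ℝ) ∈ Set.Ioo (oneSubSumPow n 1) (oneSubSumPow n 0) := by
    rw [oneSubSumPow_one_right, oneSubSumPow_zero_right]
    have : (2 : ℝ) ≤ n := by exact_mod_cast hn
    constructor <;> linarith
  obtain ⟨x, hx, hfx⟩ := intermediate_value_Ioo' zero_le_one
    (continuous_oneSubSumPow n).continuousOn hsign
  refine ⟨x, ⟨hx, (oneSubSumPow_eq_zero_iff hx.2).1 hfx⟩, fun y ⟨hy, hry⟩ => ?_⟩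
  have hfy := (oneSubSumPow_eq_zero_iff hy.2).2 hry
  exact (strictAntiOn_oneSubSumPow (by omega)).injOn hy.1.le hx.1.le (hfy.trans hfx.symm)

theorem mem_Ioc_of_root_one_sub_two_mul_add_pow (hn : 2 ≤ n) (hx : x ∈ Set.Ioo 0 1)
    (hroot : 1 - 2 * x + x ^ (n + 1) = 0) : x ∈ Set.Ioc (1 / 2) ((√5 - 1) / 2) := by
  have hfx := (oneSubSumPow_eq_zero_iff hx.2).2 hroot
  have hanti := strictAntiOn_oneSubSumPow (n := n) (by omega)
  constructor
  · refine (hanti.lt_iff_gt hx.1.le (by norm_num : (0 : ℝ) ≤ 1 / 2)).1 ?_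
    rw [hfx, oneSubSumPow_half]
    positivity
  · refine (hanti.le_iff_ge sqrt_five_sub_one_div_two_mem_Ioo.1.le hx.1.le).1 ?_
    rw [hfx]
    exact oneSubSumPow_sqrt_five_sub_one_div_two_nonpos hn

theorem root_one_sub_two_mul_add_pow_sqrt_five_sub_one_div_two :
    1 - 2 * ((√5 - 1) / 2) + ((√5 - 1) / 2) ^ (2 + 1) = 0 :=
  (oneSubSumPow_eq_zero_iff sqrt_five_sub_one_div_two_mem_Ioo.2).1
    oneSubSumPow_two_sqrt_five_sub_one_div_two

end Roots

/-- For each `k ≥ 1`, the polynomial `1 - 2x + x^{k+2}` has a unique root `z̄_k` in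
`(0,1)`; it satisfies `1/2 < z̄_k ≤ (√5-1)/2`, with `z̄_1 = (√5-1)/2`, `z̄_k → 1/2`,
and `0 < z̄_k - 1/2 ≤ (1/2) z̄_1^{k+2}`. -/
theorem zbar_roots_properties :
    (∀ k : ℕ, 1 ≤ k →
      ∃! x : ℝ, x ∈ Set.Ioo (0 : ℝ) 1 ∧ 1 - 2 * x + x ^ (k + 2) = 0) ∧
    ∀ zbar : ℕ → ℝ,
      (∀ k : ℕ, 1 ≤ k → zbar k ∈ Set.Ioo (0 : ℝ) 1 ∧
        1 - 2 * zbar k + zbar k ^ (k + 2) = 0) →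
      zbar 1 = (Real.sqrt 5 - 1) / 2 ∧
      (∀ k : ℕ, 1 ≤ k →
        1 / 2 < zbar k ∧ zbar k ≤ (Real.sqrt 5 - 1) / 2 ∧
        0 < zbar k - 1 / 2 ∧
        zbar k - 1 / 2 ≤ (1 / 2) * ((Real.sqrt 5 - 1) / 2) ^ (k + 2)) ∧
      Tendsto zbar atTop (𝓝 (1 / 2)) := by
  refine ⟨fun k hk => existsUnique_root_one_sub_two_mul_add_pow (by omega), fun zbar hzbar => ?_⟩
  have hbounds (k : ℕ) (hk : 1 ≤ k) : zbar k ∈ Set.Ioc (1 / 2) ((√5 - 1) / 2) :=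
    mem_Ioc_of_root_one_sub_two_mul_add_pow (by omega) (hzbar k hk).1 (hzbar k hk).2
  have hgap (k : ℕ) (hk : 1 ≤ k) : zbar k - 1 / 2 ≤ 1 / 2 * ((√5 - 1) / 2) ^ (k + 2) := by
    have := pow_le_pow_left₀ (hzbar k hk).1.1.le (hbounds k hk).2 (k + 2)
    linarith [(hzbar k hk).2]
  refine ⟨?_, fun k hk => ⟨(hbounds k hk).1, (hbounds k hk).2, sub_pos.2 (hbounds k hk).1,
    hgap k hk⟩, ?_⟩
  · exact (existsUnique_root_one_sub_two_mul_add_pow le_rfl).unique (hzbar 1 le_rfl)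
      ⟨sqrt_five_sub_one_div_two_mem_Ioo, root_one_sub_two_mul_add_pow_sqrt_five_sub_one_div_two⟩
  · obtain ⟨h0, h1⟩ := sqrt_five_sub_one_div_two_mem_Ioo
    have hgeom : Tendsto (fun k : ℕ => 1 / 2 * ((√5 - 1) / 2) ^ (k + 2)) atTop (𝓝 0) := by
      simpa using ((tendsto_pow_atTop_nhds_zero_of_lt_one h0.le h1).comp
        (tendsto_add_atTop_nat 2)).const_mul (1 / 2 : ℝ)
    rw [← tendsto_sub_nhds_zero_iff]
    refine squeeze_zero' ?_ ?_ hgeom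
    · filter_upwards [eventually_ge_atTop 1] with k hk
      exact sub_nonneg.2 (hbounds k hk).1.le
    · filter_upwards [eventually_ge_atTop 1] with k hk
      exact hgap k hk
end

section
/- Let a, q ∈ ℂ satisfy |a| < 1 and |q - 1/2| < 1/10. Then the function h(z) = (az;q)_∞/(z;q)_∞ is analytic in z on the open unit disc, and for every integer ν ≥ 1 its ν-th Taylor coefficient at z = 0 equals (1/(q;q)_∞) · ∑_{j=0}^∞ ( (a q^{-j};q)_∞ / (q^{-j};q)_j ) · q^{jν}, the series on the right being absolutely convergent. -/
open Complex Filter Topology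

noncomputable section

/-- finite q-Pochhammer symbol `(x;q)_n` -/
def qPF (x q : ℂ) (n : ℕ) : ℂ := ∏ i ∈ Finset.range n, (1 - x * q ^ i)

/-- infinite q-Pochhammer symbol `(x;q)_∞` -/
def qPI (x q : ℂ) : ℂ := ∏' i : ℕ, (1 - x * q ^ i)

/-!
For `‖q‖ < 1` and `‖β‖ ≤ 1` the power series `F(z) = ∑ Cₙ zⁿ` with
`Cₙ = ∏_{m<n} (β - γ qᵐ) / (1 - q^{m+1})` has bounded coefficients, and the recurrence of the
`Cₙ` gives `(1 - βz) F(z) = (1 - γz) F(qz)`. Iterating and letting `qⁿz → 0` yields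
`F(z) (βz;q)_∞ = (γz;q)_∞`. For `β = 1, γ = a` this is `h`, with Taylor coefficients
`(a;q)_ν / (q;q)_ν`. For `β = a, γ = q` reversing the finite products shows
`(aq^{-j};q)_∞ / (q^{-j};q)_j = (a;q)_∞ C_j`, so the series in `j` sums to
`(a;q)_∞ (q^{ν+1};q)_∞ / (aq^ν;q)_∞`, and dividing by `(q;q)_∞ = (q;q)_ν (q^{ν+1};q)_∞` gives
`(a;q)_ν / (q;q)_ν` again.
-/

open Finset FormalMultilinearSeries

lemma qPF_succ (x q : ℂ) (n : ℕ) : qPF x q (n + 1) = qPF x q n * (1 - x * q ^ n) :=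
  prod_range_succ _ _

section Pochhammer

variable {q : ℂ}

lemma norm_mul_pow_lt_one {x : ℂ} (hq : ‖q‖ ≤ 1) (hx : ‖x‖ < 1) (n : ℕ) : ‖x * q ^ n‖ < 1 := by
  rw [norm_mul, norm_pow]
  exact mul_lt_one_of_nonneg_of_lt_one_left (norm_nonneg x) hx (pow_le_one₀ (norm_nonneg q) hq)

lemma summable_norm_mul_pow (hq : ‖q‖ < 1) (x : ℂ) : Summable fun i : ℕ => ‖x * q ^ i‖ := by
  simpa [norm_mul, norm_pow] using
    (summable_geometric_of_lt_one (norm_nonneg q) hq).mul_left ‖x‖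

lemma multipliable_one_sub_mul_pow (hq : ‖q‖ < 1) (x : ℂ) :
    Multipliable fun i : ℕ => 1 - x * q ^ i := by
  simpa [sub_eq_add_neg] using
    multipliable_one_add_of_summable (f := fun i : ℕ => -(x * q ^ i))
      (by simpa using summable_norm_mul_pow hq x)

lemma tendsto_qPF_qPI (hq : ‖q‖ < 1) (x : ℂ) :
    Tendsto (qPF x q) atTop (𝓝 (qPI x q)) :=
  (multipliable_one_sub_mul_pow hq x).hasProd.tendsto_prod_nat

lemma qPI_ne_zero (hq : ‖q‖ < 1) {x : ℂ} (hx : ‖x‖ < 1) : qPI x q ≠ 0 := by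
  have hfactor (i : ℕ) : 1 + -(x * q ^ i) ≠ 0 := by
    rw [← sub_eq_add_neg, sub_ne_zero]
    exact fun h => (norm_mul_pow_lt_one hq.le hx i).ne (by rw [← h, norm_one])
  simpa [qPI, sub_eq_add_neg] using
    tprod_one_add_ne_zero_of_summable hfactor (by simpa using summable_norm_mul_pow hq x)

lemma qPI_eq_qPF_mul_qPI (hq : ‖q‖ < 1) (x : ℂ) (n : ℕ) :
    qPI x q = qPF x q n * qPI (x * q ^ n) q := by
  have htail : (fun i : ℕ => 1 - x * q ^ (i + n)) = fun i => 1 - x * q ^ n * q ^ i := by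
    ext i; ring
  rw [qPI, qPI, qPF, ← htail, Multipliable.prod_mul_tprod_nat_mul']
  exact htail ▸ multipliable_one_sub_mul_pow hq _

lemma qPF_div_qPF_eq (hq : ‖q‖ < 1) {x y : ℂ} (hx : ‖x‖ < 1) (hy : ‖y‖ < 1) (n : ℕ) :
    qPF x q n / qPF y q n = qPI x q / qPI y q * (qPI (y * q ^ n) q / qPI (x * q ^ n) q) := by
  have hxn := qPI_ne_zero hq (norm_mul_pow_lt_one hq.le hx n)
  have hyn := qPI_ne_zero hq (norm_mul_pow_lt_one hq.le hy n)
  rw [qPI_eq_qPF_mul_qPI hq x n, qPI_eq_qPF_mul_qPI hq y n, mul_div_mul_comm, mul_assoc,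
    div_mul_div_cancel₀ hyn, div_self hxn, mul_one]

lemma qPF_mul_zpow_neg_succ (hq : q ≠ 0) (x : ℂ) (j : ℕ) :
    qPF (x * q ^ (-((j + 1 : ℕ) : ℤ))) q (j + 1) =
      (1 - x * (q ^ (j + 1))⁻¹) * qPF (x * q ^ (-(j : ℤ))) q j := by
  have hshift (i : ℕ) : q ^ (-((j + 1 : ℕ) : ℤ)) * q ^ (i + 1) = q ^ (-(j : ℤ)) * q ^ i := by
    simp only [← zpow_natCast, ← zpow_add₀ hq]
    congr 1
    push_cast
    ring
  rw [qPF, prod_range_succ', mul_comm, qPF]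
  simp only [mul_assoc, hshift]
  simp only [pow_zero, mul_one, zpow_neg, zpow_natCast]

end Pochhammer

section OfScalars

variable {𝕜 : Type*} [NontriviallyNormedField 𝕜]

lemma one_le_radius_ofScalars_of_bounded {c : ℕ → 𝕜} {M : ℝ} (hM : ∀ n, ‖c n‖ ≤ M) :
    1 ≤ (ofScalars 𝕜 c).radius := by
  simpa using (ofScalars 𝕜 c).le_radius_of_bound M (r := 1) fun n => by simpa using hM n

lemma HasFPowerSeriesOnBall.iteratedDeriv_div_factorial_eq [CompleteSpace 𝕜] [CharZero 𝕜]
    {f : 𝕜 → 𝕜} {c : ℕ → 𝕜} {x : 𝕜} {r : ENNReal}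
    (hf : HasFPowerSeriesOnBall f (ofScalars 𝕜 c) x r) (n : ℕ) :
    iteratedDeriv n f x / n.factorial = c n := by
  rw [iteratedDeriv_eq_iteratedFDeriv, ← hf.factorial_smul, ofScalars_apply_eq]
  simp [nsmul_eq_mul, Nat.factorial_ne_zero]

end OfScalars

-- `β ^ n (γ / β; q)_n / (q; q)_n`, in a form that stays meaningful for `β = 0`.
def qBinomialCoeff (β γ q : ℂ) (n : ℕ) : ℂ :=
  ∏ m ∈ range n, (β - γ * q ^ m) / (1 - q ^ (m + 1))

def qBinomialSeries (β γ q : ℂ) : FormalMultilinearSeries ℂ ℂ ℂ :=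
  ofScalars ℂ (qBinomialCoeff β γ q)

section QBinomial

variable {β γ q : ℂ}

lemma qBinomialCoeff_eq_div (β γ q : ℂ) (n : ℕ) :
    qBinomialCoeff β γ q n = (∏ m ∈ range n, (β - γ * q ^ m)) / qPF q q n := by
  simp only [qBinomialCoeff, qPF, prod_div_distrib, pow_succ']

lemma qBinomialCoeff_one_left (a q : ℂ) (n : ℕ) :
    qBinomialCoeff 1 a q n = qPF a q n / qPF q q n := by
  simp only [qBinomialCoeff_eq_div, qPF]

lemma qBinomialCoeff_succ (β γ q : ℂ) (n : ℕ) :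
    qBinomialCoeff β γ q (n + 1) =
      qBinomialCoeff β γ q n * ((β - γ * q ^ n) / (1 - q ^ (n + 1))) :=
  prod_range_succ _ _

lemma qBinomialCoeff_succ_mul (hq : ‖q‖ < 1) (n : ℕ) :
    qBinomialCoeff β γ q (n + 1) * (1 - q ^ (n + 1)) =
      qBinomialCoeff β γ q n * (β - γ * q ^ n) := by
  have hden : (1 : ℂ) - q ^ (n + 1) ≠ 0 := fun h => by
    have := pow_lt_one₀ (norm_nonneg q) hq n.succ_ne_zero
    rw [← norm_pow, ← sub_eq_zero.1 h, norm_one] at this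
    exact this.false
  rw [qBinomialCoeff_succ]
  field_simp

lemma norm_prod_sub_mul_pow_le (hq : ‖q‖ < 1) (hβ : ‖β‖ ≤ 1) (γ : ℂ) (n : ℕ) :
    ‖∏ m ∈ range n, (β - γ * q ^ m)‖ ≤ Real.exp (∑' m, ‖γ * q ^ m‖) := by
  rw [norm_prod]
  calc ∏ m ∈ range n, ‖β - γ * q ^ m‖
      ≤ ∏ m ∈ range n, (1 + ‖γ * q ^ m‖) :=
        prod_le_prod (fun _ _ => norm_nonneg _) fun m _ => (norm_sub_le _ _).trans (by linarith)
    _ ≤ Real.exp (∑ m ∈ range n, ‖γ * q ^ m‖) :=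
        Real.prod_one_add_le_exp_sum _ fun _ => norm_nonneg _
    _ ≤ Real.exp (∑' m, ‖γ * q ^ m‖) :=
        Real.exp_le_exp.2 <|
          (summable_norm_mul_pow hq γ).sum_le_tsum _ fun _ _ => norm_nonneg _

lemma exists_norm_qBinomialCoeff_le (hq : ‖q‖ < 1) (hβ : ‖β‖ ≤ 1) (γ : ℂ) :
    ∃ M, ∀ n, ‖qBinomialCoeff β γ q n‖ ≤ M := by
  obtain ⟨D, hD⟩ := isBounded_iff_forall_norm_le.1 <| Metric.isBounded_range_of_tendsto _ <|
    (tendsto_qPF_qPI hq q).inv₀ (qPI_ne_zero hq hq)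
  refine ⟨Real.exp (∑' m, ‖γ * q ^ m‖) * D, fun n => ?_⟩
  rw [qBinomialCoeff_eq_div, div_eq_mul_inv, norm_mul]
  exact mul_le_mul (norm_prod_sub_mul_pow_le hq hβ γ n) (hD _ ⟨n, rfl⟩) (norm_nonneg _)
    (Real.exp_pos _).le

end QBinomial

lemma mem_eball_zero_one_iff {E : Type*} [SeminormedAddCommGroup E] {w : E} :
    w ∈ Metric.eball (0 : E) 1 ↔ ‖w‖ < 1 := by
  simp [← ofReal_norm]

section QBinomialSeries

variable {β γ q : ℂ}

lemma one_le_radius_qBinomialSeries (hq : ‖q‖ < 1) (hβ : ‖β‖ ≤ 1) (γ : ℂ) :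
    1 ≤ (qBinomialSeries β γ q).radius :=
  let ⟨_, hM⟩ := exists_norm_qBinomialCoeff_le hq hβ γ
  one_le_radius_ofScalars_of_bounded hM

lemma hasFPowerSeriesOnBall_qBinomialSeries_sum (hq : ‖q‖ < 1) (hβ : ‖β‖ ≤ 1) (γ : ℂ) :
    HasFPowerSeriesOnBall (qBinomialSeries β γ q).sum (qBinomialSeries β γ q) 0 1 :=
  have hr := one_le_radius_qBinomialSeries hq hβ γ
  ((qBinomialSeries β γ q).hasFPowerSeriesOnBall (zero_lt_one.trans_le hr)).mono one_pos hr

lemma qBinomialSeries_sum_eq (β γ q w : ℂ) :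
    (qBinomialSeries β γ q).sum w = ∑' n, qBinomialCoeff β γ q n * w ^ n :=
  ofScalars_sum_eq _ w

lemma summable_norm_qBinomialCoeff_mul_pow (hq : ‖q‖ < 1) (hβ : ‖β‖ ≤ 1) (γ : ℂ) {w : ℂ}
    (hw : ‖w‖ < 1) : Summable fun n => ‖qBinomialCoeff β γ q n * w ^ n‖ := by
  simpa [qBinomialSeries, ofScalars_apply_eq, mul_comm] using
    (qBinomialSeries β γ q).summable_norm_apply
      (Metric.eball_subset_eball (one_le_radius_qBinomialSeries hq hβ γ)
        (mem_eball_zero_one_iff.2 hw))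

lemma qBinomialSeries_sum_functional_eq (hq : ‖q‖ < 1) (hβ : ‖β‖ ≤ 1) (γ : ℂ) {w : ℂ}
    (hw : ‖w‖ < 1) :
    (1 - β * w) * (qBinomialSeries β γ q).sum w =
      (1 - γ * w) * (qBinomialSeries β γ q).sum (q * w) := by
  have hs := (summable_norm_qBinomialCoeff_mul_pow hq hβ γ hw).of_norm
  have hs' := (summable_norm_qBinomialCoeff_mul_pow hq hβ γ
    (norm_mul_pow_lt_one hq.le hw 1)).of_norm
  rw [pow_one, mul_comm] at hs'
  have hrec := qBinomialCoeff_succ_mul (β := β) (γ := γ) hq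
  simp only [qBinomialSeries_sum_eq]
  generalize qBinomialCoeff β γ q = C at hs hs' hrec ⊢
  have hdiff : ∑' n, C n * w ^ n - ∑' n, C n * (q * w) ^ n =
      w * (β * ∑' n, C n * w ^ n - γ * ∑' n, C n * (q * w) ^ n) :=
    calc ∑' n, C n * w ^ n - ∑' n, C n * (q * w) ^ n
        = ∑' n, (C n * w ^ n - C n * (q * w) ^ n) := (hs.tsum_sub hs').symm
      _ = ∑' n, (C (n + 1) * w ^ (n + 1) - C (n + 1) * (q * w) ^ (n + 1)) := by
        rw [(hs.sub hs').tsum_eq_zero_add]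
        simp
      _ = ∑' n, w * (β * (C n * w ^ n) - γ * (C n * (q * w) ^ n)) := tsum_congr fun n => by
        linear_combination w ^ (n + 1) * hrec n
      _ = w * (β * ∑' n, C n * w ^ n - γ * ∑' n, C n * (q * w) ^ n) := by
        rw [tsum_mul_left, (hs.mul_left β).tsum_sub (hs'.mul_left γ), tsum_mul_left, tsum_mul_left]
  linear_combination hdiff

lemma qBinomialSeries_sum_mul_qPF (hq : ‖q‖ < 1) (hβ : ‖β‖ ≤ 1) (γ : ℂ) {z : ℂ}
    (hz : ‖z‖ < 1) (n : ℕ) :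
    (qBinomialSeries β γ q).sum z * qPF (β * z) q n =
      qPF (γ * z) q n * (qBinomialSeries β γ q).sum (q ^ n * z) := by
  set F := (qBinomialSeries β γ q).sum
  induction n with
  | zero => simp [qPF]
  | succ n ih =>
    have hqnz : ‖q ^ n * z‖ < 1 := by simpa [mul_comm] using norm_mul_pow_lt_one hq.le hz n
    calc F z * qPF (β * z) q (n + 1)
        = qPF (γ * z) q n * ((1 - β * (q ^ n * z)) * F (q ^ n * z)) := by
          rw [qPF_succ, ← mul_assoc, ih]; ring
      _ = qPF (γ * z) q n * ((1 - γ * (q ^ n * z)) * F (q * (q ^ n * z))) := by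
          rw [qBinomialSeries_sum_functional_eq hq hβ γ hqnz]
      _ = qPF (γ * z) q (n + 1) * F (q ^ (n + 1) * z) := by
          rw [qPF_succ, pow_succ', mul_assoc q]; ring

lemma qBinomialSeries_sum_mul_qPI (hq : ‖q‖ < 1) (hβ : ‖β‖ ≤ 1) (γ : ℂ) {z : ℂ}
    (hz : ‖z‖ < 1) :
    (qBinomialSeries β γ q).sum z * qPI (β * z) q = qPI (γ * z) q := by
  have hF0 : (qBinomialSeries β γ q).sum 0 = 1 := by
    simp [qBinomialSeries, ← ofScalarsSum.eq_def, qBinomialCoeff]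
  have hFlim : Tendsto (fun n => (qBinomialSeries β γ q).sum (q ^ n * z)) atTop (𝓝 1) := by
    have hcont := (hasFPowerSeriesOnBall_qBinomialSeries_sum hq hβ γ).analyticAt.continuousAt
    rw [← hF0]
    refine hcont.tendsto.comp ?_
    simpa using (tendsto_pow_atTop_nhds_zero_of_norm_lt_one hq).mul_const z
  refine tendsto_nhds_unique ((tendsto_qPF_qPI hq _).const_mul _) ?_
  simpa using ((tendsto_qPF_qPI hq (γ * z)).mul hFlim).congr fun n =>
    (qBinomialSeries_sum_mul_qPF hq hβ γ hz n).symm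

theorem hasFPowerSeriesOnBall_qPI_div_qPI (hq : ‖q‖ < 1) (hβ : ‖β‖ ≤ 1) (γ : ℂ) :
    HasFPowerSeriesOnBall (fun z => qPI (γ * z) q / qPI (β * z) q) (qBinomialSeries β γ q) 0 1 :=
  (hasFPowerSeriesOnBall_qBinomialSeries_sum hq hβ γ).congr fun z hz => by
    have hz : ‖z‖ < 1 := mem_eball_zero_one_iff.1 hz
    have hβz : ‖β * z‖ < 1 := by
      rw [norm_mul]
      exact (mul_le_of_le_one_left (norm_nonneg z) hβ).trans_lt hz
    rw [eq_div_iff (qPI_ne_zero hq hβz), qBinomialSeries_sum_mul_qPI hq hβ γ hz]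

lemma hasSum_qBinomialCoeff_mul_pow (hq : ‖q‖ < 1) (hβ : ‖β‖ ≤ 1) (γ : ℂ) {z : ℂ}
    (hz : ‖z‖ < 1) :
    HasSum (fun n => qBinomialCoeff β γ q n * z ^ n) (qPI (γ * z) q / qPI (β * z) q) := by
  simpa [qBinomialSeries, ofScalars_apply_eq, mul_comm] using
    (hasFPowerSeriesOnBall_qPI_div_qPI hq hβ γ).hasSum (mem_eball_zero_one_iff.2 hz)

end QBinomialSeries

lemma one_sub_mul_inv_div_one_sub_inv {Q : ℂ} (hQ : Q ≠ 0) (x : ℂ) :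
    (1 - x * Q⁻¹) / (1 - Q⁻¹) = (x - Q) / (1 - Q) := by
  rw [← mul_div_mul_left _ _ hQ, ← neg_div_neg_eq]
  congr 1 <;> field_simp <;> ring

lemma qPF_mul_zpow_neg_div_qPF_zpow_neg {q : ℂ} (hq : q ≠ 0) (x : ℂ) (j : ℕ) :
    qPF (x * q ^ (-(j : ℤ))) q j / qPF (q ^ (-(j : ℤ))) q j = qBinomialCoeff x q q j := by
  induction j with
  | zero => simp [qPF, qBinomialCoeff]
  | succ j ih =>
    have hden := qPF_mul_zpow_neg_succ hq 1 j
    simp only [one_mul] at hden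
    rw [qPF_mul_zpow_neg_succ hq x j, hden, mul_div_mul_comm, ih, qBinomialCoeff_succ,
      one_sub_mul_inv_div_one_sub_inv (pow_ne_zero _ hq), pow_succ' q j, mul_comm]

lemma qPI_mul_zpow_neg_div_qPF_zpow_neg {q : ℂ} (hq : ‖q‖ < 1) (hq0 : q ≠ 0) (x : ℂ) (j : ℕ) :
    qPI (x * q ^ (-(j : ℤ))) q / qPF (q ^ (-(j : ℤ))) q j = qPI x q * qBinomialCoeff x q q j := by
  have hsplit := qPI_eq_qPF_mul_qPI hq (x * q ^ (-(j : ℤ))) j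
  rw [mul_assoc, ← zpow_natCast, ← zpow_add₀ hq0, neg_add_cancel, zpow_zero, mul_one] at hsplit
  rw [hsplit, mul_comm, mul_div_assoc, qPF_mul_zpow_neg_div_qPF_zpow_neg hq0]

/-- For `|a| < 1` and `|q - 1/2| < 1/10`, the function `h(z) = (az;q)_∞/(z;q)_∞` is
analytic on the open unit disc and its `ν`-th Taylor coefficient (`ν ≥ 1`) equals
`(1/(q;q)_∞) ∑_{j≥0} ((a q^{-j};q)_∞/(q^{-j};q)_j) q^{jν}`, the series converging
absolutely. -/
theorem qPochhammer_quotient_taylor_coefficients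
    (a q : ℂ) (ha : ‖a‖ < 1) (hq : ‖q - 1 / 2‖ < 1 / 10) :
    AnalyticOnNhd ℂ (fun z => qPI (a * z) q / qPI z q) {z : ℂ | ‖z‖ < 1} ∧
    ∀ ν : ℕ, 1 ≤ ν →
      Summable (fun j : ℕ =>
        ‖(qPI (a * q ^ (-(j : ℤ))) q / qPF (q ^ (-(j : ℤ))) q j) * q ^ (j * ν)‖) ∧
      iteratedDeriv ν (fun z => qPI (a * z) q / qPI z q) 0 / (Nat.factorial ν) =
        (1 / qPI q q) *
          ∑' j : ℕ, (qPI (a * q ^ (-(j : ℤ))) q / qPF (q ^ (-(j : ℤ))) q j) * q ^ (j * ν) := by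
  obtain ⟨hq1, hq0⟩ : ‖q‖ < 1 ∧ q ≠ 0 := by
    refine ⟨?_, by rintro rfl; norm_num at hq⟩
    calc ‖q‖ ≤ ‖q - 1 / 2‖ + ‖(1 / 2 : ℂ)‖ := norm_le_norm_sub_add q _
      _ < 1 := by norm_num at hq ⊢; linarith
  have hseries : HasFPowerSeriesOnBall (fun z => qPI (a * z) q / qPI z q)
      (qBinomialSeries 1 a q) 0 1 := by
    simpa using hasFPowerSeriesOnBall_qPI_div_qPI hq1 norm_one.le a
  refine ⟨fun z hz => hseries.analyticOnNhd z (mem_eball_zero_one_iff.2 hz), fun ν hν => ?_⟩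
  have hqν : ‖q ^ ν‖ < 1 := by
    rw [norm_pow]
    exact pow_lt_one₀ (norm_nonneg q) hq1 (by omega)
  have hterm (j : ℕ) : (qPI (a * q ^ (-(j : ℤ))) q / qPF (q ^ (-(j : ℤ))) q j) * q ^ (j * ν) =
      qPI a q * (qBinomialCoeff a q q j * (q ^ ν) ^ j) := by
    rw [qPI_mul_zpow_neg_div_qPF_zpow_neg hq1 hq0, mul_comm j, pow_mul, mul_assoc]
  refine ⟨?_, ?_⟩
  · simp only [hterm, norm_mul (qPI a q)]
    exact (summable_norm_qBinomialCoeff_mul_pow hq1 ha.le q hqν).mul_left _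
  · rw [hseries.iteratedDeriv_div_factorial_eq, qBinomialCoeff_one_left,
      qPF_div_qPF_eq hq1 ha hq1, tsum_congr hterm, tsum_mul_left,
      (hasSum_qBinomialCoeff_mul_pow hq1 ha.le q hqν).tsum_eq]
    ring
end
end

section
/- There exist ε₀ > 0 and ε₁ > 0 such that for all real q ∈ (1/2-ε₀, 1/2+ε₀), all real v ∈ (3/2-ε₁, 3/2+ε₁), and every integer j ≥ 0: (i) h_j(t;q,v) = O(1/t) as t → +∞; (ii) if j ≥ 1 then h_j(t;q,v) = O(1) as t → 0⁺; (iii) h_0(t;q,v) = O(t^{-γ}) as t → 0⁺, where γ = log v / log(1/q). -/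
open Filter Asymptotics Topology

noncomputable section

/-- `h_j(t;q,v) = q^{-2} ∑_{ν≥1} (v q^j)^ν / (1 + t q^{-ν-2})` -/
def hfun (q v : ℝ) (j : ℕ) (t : ℝ) : ℝ :=
  (∑' ν : ℕ, (v * q ^ j) ^ (ν + 1) / (1 + t / q ^ (ν + 3))) / q ^ 2

/-!
Write `a = v q^j`. The `ν`-th term of the series is at most `a^ν` and at most `a^ν q^{ν+2} / t`;
since `a q ≤ v q < 1`, the second bound gives `O(1/t)` at infinity, and for `j ≥ 1` the first one
is already summable. For `j = 0` and small `t`, choose `N` with `q^{N+1} ≤ t ≤ q^N`: the terms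
`ν ≤ N` add up to `O(v^N)` by the first bound, the others to `O(v^N)` by the second, and
`v^N = q^{-Nγ} ≤ t^{-γ}`.
-/

lemma tsum_pow_succ_of_lt_one {r : ℝ} (h₀ : 0 ≤ r) (h₁ : r < 1) :
    ∑' n : ℕ, r ^ (n + 1) = r / (1 - r) := by
  simp_rw [pow_succ', tsum_mul_left, tsum_geometric_of_lt_one h₀ h₁, div_eq_mul_inv]

lemma isBigO_of_eventually_nonneg_of_le {α : Type*} {l : Filter α} {f g : α → ℝ} (C : ℝ)
    (h : ∀ᶠ x in l, 0 ≤ f x ∧ f x ≤ C * g x) : f =O[l] g :=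
  IsBigO.of_bound |C| <| h.mono fun x ⟨hf₀, hf⟩ => by
    rw [Real.norm_of_nonneg hf₀, Real.norm_eq_abs, ← abs_mul]
    exact hf.trans (le_abs_self _)

lemma pow_le_rpow_neg_of_le_pow {q v t : ℝ} {N : ℕ} (hq₀ : 0 < q) (hq₁ : q < 1) (hv : 1 ≤ v)
    (ht : 0 < t) (htq : t ≤ q ^ N) :
    v ^ N ≤ t ^ (-(Real.log v / Real.log (1 / q))) := by
  have hlogq : Real.log q < 0 := Real.log_neg hq₀ hq₁
  have hγ : -(Real.log v / Real.log (1 / q)) ≤ 0 := by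
    rw [one_div, Real.log_inv]
    exact neg_nonpos.2 (div_nonneg (Real.log_nonneg hv) (by linarith))
  have hqv : q ^ (-(Real.log v / Real.log (1 / q))) = v := by
    rw [Real.rpow_def_of_pos hq₀, one_div, Real.log_inv, div_neg, neg_neg,
      mul_div_cancel₀ _ hlogq.ne, Real.exp_log (by linarith)]
  calc v ^ N = (q ^ N) ^ (-(Real.log v / Real.log (1 / q))) := by
        rw [← Real.rpow_pow_comm hq₀.le, hqv]
    _ ≤ t ^ (-(Real.log v / Real.log (1 / q))) := Real.rpow_le_rpow_of_nonpos ht htq hγ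

def hseries (a q t : ℝ) : ℝ := ∑' ν : ℕ, a ^ (ν + 1) / (1 + t / q ^ (ν + 3))

section hseries

variable {a q t : ℝ}

lemma hseries_term_nonneg (hq : 0 < q) (ha : 0 ≤ a) (ht : 0 ≤ t) (ν : ℕ) :
    0 ≤ a ^ (ν + 1) / (1 + t / q ^ (ν + 3)) := by
  positivity

lemma hseries_term_le_pow (hq : 0 < q) (ha : 0 ≤ a) (ht : 0 ≤ t) (ν : ℕ) :
    a ^ (ν + 1) / (1 + t / q ^ (ν + 3)) ≤ a ^ (ν + 1) :=
  div_le_self (by positivity) (le_add_of_nonneg_right (by positivity))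

lemma hseries_term_le_div (hq : 0 < q) (ha : 0 ≤ a) (ht : 0 < t) (ν : ℕ) :
    a ^ (ν + 1) / (1 + t / q ^ (ν + 3)) ≤ q ^ 2 / t * (a * q) ^ (ν + 1) :=
  calc a ^ (ν + 1) / (1 + t / q ^ (ν + 3)) ≤ a ^ (ν + 1) / (t / q ^ (ν + 3)) :=
        div_le_div_of_nonneg_left (by positivity) (by positivity) (by linarith)
    _ = q ^ 2 / t * (a * q) ^ (ν + 1) := by
        rw [div_div_eq_mul_div, mul_pow]
        ring

lemma summable_hseries_term (hq : 0 < q) (ha : 0 ≤ a) (haq : a * q < 1) (ht : 0 < t) :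
    Summable fun ν : ℕ => a ^ (ν + 1) / (1 + t / q ^ (ν + 3)) :=
  .of_nonneg_of_le (hseries_term_nonneg hq ha ht.le) (hseries_term_le_div hq ha ht)
    (((summable_nat_add_iff 1).2 (summable_geometric_of_lt_one (by positivity) haq)).mul_left _)

lemma hseries_nonneg (hq : 0 < q) (ha : 0 ≤ a) (ht : 0 ≤ t) : 0 ≤ hseries a q t :=
  tsum_nonneg (hseries_term_nonneg hq ha ht)

lemma hseries_le_div (hq : 0 < q) (ha : 0 ≤ a) (haq : a * q < 1) (ht : 0 < t) :
    hseries a q t ≤ q ^ 2 * (a * q / (1 - a * q)) * (1 / t) :=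
  calc hseries a q t ≤ ∑' ν : ℕ, q ^ 2 / t * (a * q) ^ (ν + 1) :=
        (summable_hseries_term hq ha haq ht).tsum_le_tsum (hseries_term_le_div hq ha ht)
          (((summable_nat_add_iff 1).2
            (summable_geometric_of_lt_one (by positivity) haq)).mul_left _)
    _ = q ^ 2 * (a * q / (1 - a * q)) * (1 / t) := by
        rw [tsum_mul_left, tsum_pow_succ_of_lt_one (by positivity) haq]
        ring

lemma hseries_le_of_lt_one (hq : 0 < q) (ha : 0 ≤ a) (ha₁ : a < 1) (ht : 0 ≤ t) :
    hseries a q t ≤ a / (1 - a) := by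
  have hgeom : Summable fun ν : ℕ => a ^ (ν + 1) :=
    (summable_nat_add_iff 1).2 (summable_geometric_of_lt_one ha ha₁)
  calc hseries a q t ≤ ∑' ν : ℕ, a ^ (ν + 1) :=
        (hgeom.of_nonneg_of_le (hseries_term_nonneg hq ha ht)
          (hseries_term_le_pow hq ha ht)).tsum_le_tsum (hseries_term_le_pow hq ha ht) hgeom
    _ = a / (1 - a) := tsum_pow_succ_of_lt_one ha ha₁

lemma sum_range_hseries_term_le (hq : 0 < q) (ha : 1 < a) (ht : 0 ≤ t) (N : ℕ) :
    ∑ ν ∈ Finset.range N, a ^ (ν + 1) / (1 + t / q ^ (ν + 3)) ≤ a ^ N * (a / (a - 1)) := by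
  have ha₀ : 0 ≤ a := by linarith
  calc ∑ ν ∈ Finset.range N, a ^ (ν + 1) / (1 + t / q ^ (ν + 3))
        ≤ ∑ ν ∈ Finset.range N, a ^ (ν + 1) :=
        Finset.sum_le_sum fun ν _ => hseries_term_le_pow hq ha₀ ht ν
    _ = a * (a ^ N - 1) / (a - 1) := by
        simp_rw [pow_succ']
        rw [← Finset.mul_sum, geom_sum_eq ha.ne', mul_div_assoc]
    _ ≤ a ^ N * (a / (a - 1)) := by
        rw [mul_div_assoc', mul_comm (a ^ N)]
        exact div_le_div_of_nonneg_right (by linarith) (by linarith)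

lemma tsum_hseries_term_nat_add_le (hq : 0 < q) (ha : 0 ≤ a) (haq : a * q < 1) {N : ℕ}
    (hqt : q ^ (N + 1) ≤ t) :
    ∑' ν : ℕ, a ^ (ν + N + 1) / (1 + t / q ^ (ν + N + 3))
      ≤ a ^ N * (a * q ^ 2 / (1 - a * q)) := by
  have ht : 0 < t := (pow_pos hq _).trans_le hqt
  have hmaj : ∀ ν : ℕ, a ^ (ν + N + 1) / (1 + t / q ^ (ν + N + 3))
      ≤ q ^ 2 / t * (a * q) ^ (N + 1) * (a * q) ^ ν := fun ν => by
    convert hseries_term_le_div hq ha ht (ν + N) using 1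
    ring
  have hgeom := summable_geometric_of_lt_one (by positivity) haq
  calc ∑' ν : ℕ, a ^ (ν + N + 1) / (1 + t / q ^ (ν + N + 3))
        ≤ ∑' ν : ℕ, q ^ 2 / t * (a * q) ^ (N + 1) * (a * q) ^ ν :=
        ((summable_nat_add_iff N).2 (summable_hseries_term hq ha haq ht)).tsum_le_tsum hmaj
          (hgeom.mul_left _)
    _ = a ^ N * (a * q ^ 2 / (1 - a * q)) * (q ^ (N + 1) / t) := by
        rw [tsum_mul_left, tsum_geometric_of_lt_one (by positivity) haq, mul_pow]
        ring
    _ ≤ a ^ N * (a * q ^ 2 / (1 - a * q)) :=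
        mul_le_of_le_one_right (by have := sub_pos.2 haq; positivity)
          (div_le_one_of_le₀ hqt ht.le)

lemma hseries_le_pow_mul (hq : 0 < q) (ha : 1 < a) (haq : a * q < 1) {N : ℕ}
    (hqt : q ^ (N + 1) ≤ t) :
    hseries a q t ≤ a ^ N * (a / (a - 1) + a * q ^ 2 / (1 - a * q)) := by
  have ht : 0 < t := (pow_pos hq _).trans_le hqt
  rw [hseries, ← (summable_hseries_term hq (by linarith) haq ht).sum_add_tsum_nat_add N,
    mul_add]
  exact add_le_add (sum_range_hseries_term_le hq ha ht.le N)
    (tsum_hseries_term_nat_add_le hq (by linarith) haq hqt)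

theorem hseries_isBigO_atTop (hq : 0 < q) (ha : 0 ≤ a) (haq : a * q < 1) :
    hseries a q =O[atTop] fun t => 1 / t :=
  isBigO_of_eventually_nonneg_of_le _ <| (eventually_gt_atTop 0).mono fun _ ht =>
    ⟨hseries_nonneg hq ha ht.le, hseries_le_div hq ha haq ht⟩

theorem hseries_isBigO_one (hq : 0 < q) (ha : 0 ≤ a) (ha₁ : a < 1) :
    hseries a q =O[𝓝[>] 0] fun _ => (1 : ℝ) :=
  isBigO_of_eventually_nonneg_of_le (a / (1 - a)) <| by
    filter_upwards [self_mem_nhdsWithin] with t (ht : 0 < t)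
    exact ⟨hseries_nonneg hq ha ht.le, by simpa using hseries_le_of_lt_one hq ha ha₁ ht.le⟩

theorem hseries_isBigO_rpow (hq₀ : 0 < q) (hq₁ : q < 1) (ha : 1 < a) (haq : a * q < 1) :
    hseries a q =O[𝓝[>] 0] fun t => t ^ (-(Real.log a / Real.log (1 / q))) := by
  refine isBigO_of_eventually_nonneg_of_le (a / (a - 1) + a * q ^ 2 / (1 - a * q)) ?_
  filter_upwards [Ioo_mem_nhdsGT zero_lt_one] with t ⟨ht₀, ht₁⟩
  obtain ⟨N, hqt, htq⟩ := exists_nat_pow_near_of_lt_one ht₀ ht₁.le hq₀ hq₁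
  have hK : 0 ≤ a / (a - 1) + a * q ^ 2 / (1 - a * q) := by
    have := sub_pos.2 ha
    have := sub_pos.2 haq
    positivity
  refine ⟨hseries_nonneg hq₀ (by linarith) ht₀.le, ?_⟩
  calc hseries a q t ≤ a ^ N * (a / (a - 1) + a * q ^ 2 / (1 - a * q)) :=
        hseries_le_pow_mul hq₀ ha haq hqt.le
    _ ≤ _ := by
        rw [mul_comm]
        exact mul_le_mul_of_nonneg_left (pow_le_rpow_neg_of_le_pow hq₀ hq₁ ha.le ht₀ htq) hK

end hseries

lemma hfun_isBigO_of_hseries {q v : ℝ} {j : ℕ} {l : Filter ℝ} {g : ℝ → ℝ}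
    (h : hseries (v * q ^ j) q =O[l] g) : (fun t => hfun q v j t) =O[l] g :=
  (h.const_mul_left (q ^ 2)⁻¹).congr_left fun _ => inv_mul_eq_div _ _

/-- For `q` near `1/2` and `v` near `3/2`: `h_j(t) = O(1/t)` as `t → ∞`;
`h_j(t) = O(1)` as `t → 0⁺` for `j ≥ 1`; and `h_0(t) = O(t^{-γ})` as `t → 0⁺`,
where `γ = log v / log(1/q)`. -/
theorem hfun_asymptotic_bounds :
    ∃ ε₀ : ℝ, 0 < ε₀ ∧ ∃ ε₁ : ℝ, 0 < ε₁ ∧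
      ∀ q v : ℝ, |q - 1 / 2| < ε₀ → |v - 3 / 2| < ε₁ →
        (∀ j : ℕ, (fun t => hfun q v j t) =O[atTop] (fun t => 1 / t)) ∧
        (∀ j : ℕ, 1 ≤ j →
          (fun t => hfun q v j t) =O[𝓝[>] (0 : ℝ)] (fun _ => (1 : ℝ))) ∧
        (fun t => hfun q v 0 t) =O[𝓝[>] (0 : ℝ)]
          (fun t => t ^ (-(Real.log v / Real.log (1 / q)))) := by
  refine ⟨1 / 100, by norm_num, 1 / 100, by norm_num, fun q v hq hv => ?_⟩
  obtain ⟨hq₀, hq₁⟩ : 0 < q ∧ q < 1 := by constructor <;> linarith [abs_lt.1 hq]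
  have hv₁ : 1 < v := by linarith [abs_lt.1 hv]
  have hvq : v * q < 1 := by nlinarith [abs_lt.1 hq, abs_lt.1 hv]
  have hv₀ : 0 ≤ v := by linarith
  have hqv₀ : 0 ≤ v * q := by positivity
  have h₀ : hseries v q =O[𝓝[>] 0] fun t => t ^ (-(Real.log v / Real.log (1 / q))) :=
    hseries_isBigO_rpow hq₀ hq₁ hv₁ hvq
  refine ⟨fun j => hfun_isBigO_of_hseries (hseries_isBigO_atTop hq₀ (by positivity) ?_),
    fun j hj => hfun_isBigO_of_hseries (hseries_isBigO_one hq₀ (by positivity) ?_),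
    hfun_isBigO_of_hseries (j := 0) (by simpa only [pow_zero, mul_one] using h₀)⟩
  · nlinarith [mul_le_mul_of_nonneg_left (pow_le_one₀ (n := j) hq₀.le hq₁.le) hqv₀]
  · nlinarith [mul_le_mul_of_nonneg_left (pow_le_pow_of_le_one hq₀.le hq₁.le hj) hv₀]
end
end
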